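/- arXiv:2510.07470 — 4 statements merged into one kernel-verified Lean document; each statement's English description precedes it below -/
import Mathlib

section
/- (Convergence rate of RED-Prox.) Let f, g : ℝ^d → ℝ be differentiable, with f convex with L_f-Lipschitz gradient and g with L_g-Lipschitz gradient; set L = L_f + L_g and F = f + g, and assume F is bounded below by m ∈ ℝ. Let η = 1/L, let x⁰ ∈ ℝ^d, and let the iterates satisfy (x^{k+1} − x^k)/η = −∇g(x^k) − ∇f(x^{k+1}) for all k ≥ 0 (the first-order optimality characterization of x^{k+1} = prox_{ηf}(x^k − η∇g(x^k))). Then for every integer n ≥ 1 there exists k ∈ {0, …, n−1} with ‖∇F(x^k)‖ ≤ (2/√n)·√(2·L·(F(x⁰) − m)). -/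
/-!
Each step is a forward step on `g` followed by an implicit step on `f`. Combining the descent
lemma for `g` with the first-order convexity inequality for `f` shows that a step decreases
`F = f + g` by at least `L / 2 * ‖x (k + 1) - x k‖ ^ 2`, and the step equation together with the
Lipschitz bound on `∇f` shows `‖∇F (x k)‖ ≤ 2 * L * ‖x (k + 1) - x k‖`. Summing the decreases
over `n` steps bounds their total by `F (x 0) - m`, so some step decreases `F` by at most
`(F (x 0) - m) / n`, and at that step the gradient is small.
-/

open Finset
open scoped RealInnerProductSpace

section Gradient

variable {E : Type*} [NormedAddCommGroup E] [InnerProductSpace ℝ E] [CompleteSpace E]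

lemma gradient_add {f g : E → ℝ} {x : E} (hf : DifferentiableAt ℝ f x)
    (hg : DifferentiableAt ℝ g x) :
    gradient (f + g) x = gradient f x + gradient g x := by
  refine HasGradientAt.gradient ?_
  rw [hasGradientAt_iff_hasFDerivAt, map_add]
  exact hf.hasGradientAt.hasFDerivAt.add hg.hasGradientAt.hasFDerivAt

lemma hasDerivAt_comp_add_smul {u : E → ℝ} {x v : E} {t : ℝ}
    (hu : DifferentiableAt ℝ u (x + t • v)) :
    HasDerivAt (fun s : ℝ => u (x + s • v)) ⟪gradient u (x + t • v), v⟫ t := by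
  have hline : HasDerivAt (fun s : ℝ => x + s • v) v t := by
    simpa using ((hasDerivAt_id t).smul_const v).const_add x
  have h := hu.hasFDerivAt.comp_hasDerivAt t hline
  rwa [← inner_gradient_left] at h

lemma ConvexOn.add_inner_gradient_le {u : E → ℝ} (hconv : ConvexOn ℝ Set.univ u) {x : E}
    (hu : DifferentiableAt ℝ u x) (y : E) :
    u x + ⟪gradient u x, y - x⟫ ≤ u y := by
  have hline : (fun t : ℝ => u (x + t • (y - x))) = u ∘ AffineMap.lineMap x y := by
    funext t
    simp [AffineMap.lineMap_apply_module', add_comm]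
  have hconv_line : ConvexOn ℝ Set.univ fun t : ℝ => u (x + t • (y - x)) := by
    rw [hline]
    simpa using hconv.comp_affineMap (AffineMap.lineMap x y)
  have hderiv : HasDerivAt (fun t : ℝ => u (x + t • (y - x))) ⟪gradient u x, y - x⟫ 0 := by
    simpa using hasDerivAt_comp_add_smul (v := y - x) (t := 0) (by simpa using hu)
  have hslope := hconv_line.le_slope_of_hasDerivAt (Set.mem_univ 0) (Set.mem_univ 1) one_pos hderiv
  simp only [slope_def_field, zero_smul, add_zero, one_smul, add_sub_cancel, sub_zero,
    div_one] at hslope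
  linarith

lemma le_add_inner_gradient_add_sq {u : E → ℝ} {Lu : ℝ} (hu : Differentiable ℝ u)
    (hlip : ∀ a b : E, ‖gradient u a - gradient u b‖ ≤ Lu * ‖a - b‖) (x y : E) :
    u y ≤ u x + ⟪gradient u x, y - x⟫ + Lu / 2 * ‖y - x‖ ^ 2 := by
  set v := y - x
  set c := ⟪gradient u x, v⟫
  set a := Lu * ‖v‖ ^ 2
  set h : ℝ → ℝ := fun t => u (x + t • v) - (c * t + a / 2 * t ^ 2)
  have hderiv (t : ℝ) : HasDerivAt h (⟪gradient u (x + t • v), v⟫ - (c + a * t)) t := by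
    have hquad : HasDerivAt (fun t : ℝ => c * t + a / 2 * t ^ 2) (c + a * t) t :=
      (((hasDerivAt_id' t).const_mul c).fun_add
        ((hasDerivAt_pow 2 t).const_mul (a / 2))).congr_deriv (by push_cast; ring)
    exact (hasDerivAt_comp_add_smul (hu _)).sub hquad
  have hderiv_nonpos (t : ℝ) (ht : 0 < t) :
      ⟪gradient u (x + t • v), v⟫ - (c + a * t) ≤ 0 := by
    have hgrad : ‖gradient u (x + t • v) - gradient u x‖ ≤ Lu * (t * ‖v‖) := by
      simpa [norm_smul, abs_of_pos ht] using hlip (x + t • v) x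
    calc ⟪gradient u (x + t • v), v⟫ - (c + a * t)
        = ⟪gradient u (x + t • v) - gradient u x, v⟫ - a * t := by
          rw [inner_sub_left]; ring
      _ ≤ ‖gradient u (x + t • v) - gradient u x‖ * ‖v‖ - a * t := by
          gcongr; exact real_inner_le_norm _ _
      _ ≤ Lu * (t * ‖v‖) * ‖v‖ - a * t := by gcongr
      _ = 0 := by ring
  have hanti : AntitoneOn h (Set.Icc 0 1) := by
    apply antitoneOn_of_deriv_nonpos (convex_Icc 0 1)
    · exact fun t _ => (hderiv t).continuousAt.continuousWithinAt
    · exact fun t _ => (hderiv t).differentiableAt.differentiableWithinAt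
    · intro t ht
      rw [interior_Icc] at ht
      rw [(hderiv t).deriv]
      exact hderiv_nonpos t ht.1
  have h10 : h 1 ≤ h 0 := hanti (by simp) (by simp) zero_le_one
  simp only [h, one_smul, add_sub_cancel, zero_smul, add_zero, v] at h10
  linarith

end Gradient

section ProximalGradientStep

variable {E : Type*} [NormedAddCommGroup E] [InnerProductSpace ℝ E] [CompleteSpace E]
  {f g : E → ℝ} {Lf Lg L : ℝ} {x y : E}

lemma add_add_sq_le_of_proxGrad_step (hf : ConvexOn ℝ Set.univ f)
    (hfd : DifferentiableAt ℝ f y) (hgd : Differentiable ℝ g)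
    (hflip : ‖gradient f y - gradient f x‖ ≤ Lf * ‖y - x‖)
    (hglip : ∀ a b : E, ‖gradient g a - gradient g b‖ ≤ Lg * ‖a - b‖) (hL : L = Lf + Lg)
    (hstep : L • (y - x) = -gradient g x - gradient f y) :
    f y + g y + L / 2 * ‖y - x‖ ^ 2 ≤ f x + g x := by
  have hf_conv := hf.add_inner_gradient_le hfd x
  have hg_desc := le_add_inner_gradient_add_sq hgd hglip x y
  have hinner : ⟪gradient g x, y - x⟫ + ⟪gradient f y, y - x⟫ = -(L * ‖y - x‖ ^ 2) := by
    rw [← inner_add_left, show gradient g x + gradient f y = -(L • (y - x)) by rw [hstep]; abel,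
      inner_neg_left, real_inner_smul_left, real_inner_self_eq_norm_sq]
  have hLf : 0 ≤ Lf * ‖y - x‖ * ‖y - x‖ :=
    mul_nonneg ((norm_nonneg _).trans hflip) (norm_nonneg _)
  rw [show x - y = -(y - x) by abel, inner_neg_right] at hf_conv
  nlinarith

lemma norm_gradient_add_le_of_proxGrad_step (hfd : DifferentiableAt ℝ f x)
    (hgd : DifferentiableAt ℝ g x)
    (hflip : ‖gradient f x - gradient f y‖ ≤ Lf * ‖x - y‖)
    (hglip : ‖gradient g x - gradient g y‖ ≤ Lg * ‖x - y‖) (hL : L = Lf + Lg)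
    (hstep : L • (y - x) = -gradient g x - gradient f y) :
    ‖gradient (f + g) x‖ ≤ 2 * L * ‖y - x‖ := by
  have hsplit : gradient (f + g) x = (gradient f x - gradient f y) - L • (y - x) := by
    rw [gradient_add hfd hgd, hstep]; abel
  rw [norm_sub_rev x y] at hflip hglip
  have hLf : 0 ≤ Lf * ‖y - x‖ := (norm_nonneg _).trans hflip
  have hLg : 0 ≤ Lg * ‖y - x‖ := (norm_nonneg _).trans hglip
  have hstep_norm : ‖L • (y - x)‖ = L * ‖y - x‖ := by
    have hL_nonneg : 0 ≤ L * ‖y - x‖ := by rw [hL, add_mul]; exact add_nonneg hLf hLg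
    rw [norm_smul, Real.norm_eq_abs, ← abs_of_nonneg hL_nonneg, abs_mul, abs_norm]
  calc ‖gradient (f + g) x‖ ≤ ‖gradient f x - gradient f y‖ + ‖L • (y - x)‖ := by
        rw [hsplit]; exact norm_sub_le _ _
    _ ≤ Lf * ‖y - x‖ + L * ‖y - x‖ := by rw [hstep_norm]; gcongr
    _ ≤ 2 * L * ‖y - x‖ := by rw [hL]; linarith

end ProximalGradientStep

lemma exists_lt_le_div_of_add_le {c Φ : ℕ → ℝ} (hΦ : ∀ k, c k + Φ (k + 1) ≤ Φ k) {m : ℝ}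
    {n : ℕ} (hm : m ≤ Φ n) (hn : 1 ≤ n) :
    ∃ k < n, c k ≤ (Φ 0 - m) / n := by
  have hsum : ∑ k ∈ range n, c k ≤ ∑ _k ∈ range n, (Φ 0 - m) / n := by
    calc ∑ k ∈ range n, c k ≤ ∑ k ∈ range n, (Φ k - Φ (k + 1)) :=
          sum_le_sum fun k _ => by linarith [hΦ k]
      _ = Φ 0 - Φ n := sum_range_sub' Φ n
      _ ≤ ∑ _k ∈ range n, (Φ 0 - m) / n := by
          rw [sum_const, card_range, nsmul_eq_mul, mul_div_cancel₀ _ (by positivity)]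
          linarith
  obtain ⟨k, hk, hck⟩ := exists_le_of_sum_le (nonempty_range_iff.mpr (by omega)) hsum
  exact ⟨k, mem_range.mp hk, hck⟩

lemma le_two_div_sqrt_mul_sqrt {a D L c n : ℝ} (hn : 0 < n) (hL : 0 ≤ L) (ha : 0 ≤ a)
    (haD : a ≤ 2 * L * D) (hD : L / 2 * D ^ 2 ≤ c / n) :
    a ≤ 2 / √n * √(2 * L * c) := by
  have hc : 0 ≤ c := by
    have : 0 ≤ c / n := le_trans (by positivity) hD
    exact (div_nonneg_iff.mp this).elim (·.1) fun h => absurd h.2 (not_le.mpr hn)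
  refine le_of_pow_le_pow_left₀ two_ne_zero (by positivity) ?_
  rw [mul_pow, div_pow, Real.sq_sqrt hn.le, Real.sq_sqrt (by positivity)]
  calc a ^ 2 ≤ (2 * L * D) ^ 2 := pow_le_pow_left₀ ha haD 2
    _ = 8 * L * (L / 2 * D ^ 2) := by ring
    _ ≤ 8 * L * (c / n) := by gcongr
    _ = 2 ^ 2 / n * (2 * L * c) := by ring

theorem red_prox_convergence_rate_general
    {d : ℕ}
    (f g F : EuclideanSpace ℝ (Fin d) → ℝ) (Lf Lg L : ℝ)
    (hL : 0 < L) (hLdef : L = Lf + Lg)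
    (hFdef : ∀ w, F w = f w + g w)
    (hfd : Differentiable ℝ f) (hgd : Differentiable ℝ g)
    (hfconv : ConvexOn ℝ Set.univ f)
    (hflip : ∀ a b : EuclideanSpace ℝ (Fin d),
      ‖gradient f a - gradient f b‖ ≤ Lf * ‖a - b‖)
    (hglip : ∀ a b : EuclideanSpace ℝ (Fin d),
      ‖gradient g a - gradient g b‖ ≤ Lg * ‖a - b‖)
    (m : ℝ) (hm : ∀ y, m ≤ F y)
    (η : ℝ) (hη : η = 1 / L)
    (x : ℕ → EuclideanSpace ℝ (Fin d))
    (hiter : ∀ k : ℕ,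
      (1 / η) • (x (k + 1) - x k) = -gradient g (x k) - gradient f (x (k + 1)))
    (n : ℕ) (hn : 1 ≤ n) :
    ∃ k < n, ‖gradient F (x k)‖ ≤
      (2 / Real.sqrt n) * Real.sqrt (2 * L * (F (x 0) - m)) := by
  have hF : F = f + g := funext hFdef
  have hstep (k : ℕ) :
      L • (x (k + 1) - x k) = -gradient g (x k) - gradient f (x (k + 1)) := by
    simpa only [hη, one_div_one_div] using hiter k
  have hdecrease (k : ℕ) : L / 2 * ‖x (k + 1) - x k‖ ^ 2 + F (x (k + 1)) ≤ F (x k) := by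
    have := add_add_sq_le_of_proxGrad_step hfconv (hfd _) hgd (hflip _ _) hglip hLdef (hstep k)
    rw [hF, Pi.add_apply, Pi.add_apply]
    linarith
  obtain ⟨k, hkn, hk⟩ := exists_lt_le_div_of_add_le (Φ := fun k => F (x k)) hdecrease (hm (x n)) hn
  refine ⟨k, hkn, le_two_div_sqrt_mul_sqrt (by positivity) hL.le (norm_nonneg _) ?_ hk⟩
  rw [hF]
  exact norm_gradient_add_le_of_proxGrad_step (hfd _) (hgd _) (hflip _ _) (hglip _ _) hLdef
    (hstep k)

/-- Convergence rate of RED-Prox (proximal gradient method,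
iterates characterized by the first-order optimality condition). -/
theorem red_prox_convergence_rate
    {d : ℕ} (hd : 1 ≤ d)
    (f g F : EuclideanSpace ℝ (Fin d) → ℝ) (Lf Lg L : ℝ)
    (hL : 0 < L) (hLdef : L = Lf + Lg)
    (hFdef : ∀ w, F w = f w + g w)
    (hfd : Differentiable ℝ f) (hgd : Differentiable ℝ g)
    (hfconv : ConvexOn ℝ Set.univ f)
    (hflip : ∀ a b : EuclideanSpace ℝ (Fin d),
      ‖gradient f a - gradient f b‖ ≤ Lf * ‖a - b‖)
    (hglip : ∀ a b : EuclideanSpace ℝ (Fin d),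
      ‖gradient g a - gradient g b‖ ≤ Lg * ‖a - b‖)
    (m : ℝ) (hm : ∀ y, m ≤ F y)
    (η : ℝ) (hη : η = 1 / L)
    (x : ℕ → EuclideanSpace ℝ (Fin d))
    (hiter : ∀ k : ℕ,
      (1 / η) • (x (k + 1) - x k) = -gradient g (x k) - gradient f (x (k + 1)))
    (n : ℕ) (hn : 1 ≤ n) :
    ∃ k < n, ‖gradient F (x k)‖ ≤
      (2 / Real.sqrt n) * Real.sqrt (2 * L * (F (x 0) - m)) :=
  red_prox_convergence_rate_general f g F Lf Lg L hL hLdef hFdef hfd hgd hfconv hflip hglip m hm η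
    hη x hiter n hn
end

section
/- (Convergence of RISP-Prox, Theorem 2.) Let f, g : ℝ^d → ℝ be twice differentiable, with f convex, ∇f L_f-Lipschitz and Hessian of f ρ_f-Lipschitz, and with g ν-weakly convex, ∇g L_g-Lipschitz and Hessian of g ρ_g-Lipschitz. Set L = L_f + L_g, ρ = ρ_f + ρ_g, F = f + g, assume F is bounded below by m ∈ ℝ, and let Δ_F = F(x⁰) − m for an initial point x⁰ ∈ ℝ^d. Let n ≥ 1 be an integer, set ε = Δ_F^{4/7}·(2L)^{2/7}·ρ^{1/7}·n^{−4/7} + 4·L²·ρ^{−1}·n^{−4}, and assume ν ≤ 8·(ε·ρ)^{1/4}·√L. Run the RISP-Prox algorithm with parameters η = 1/(8L), B = √(ε/(4ρ)), θ = 4·(ε·ρ·η²)^{1/4}, assumed to satisfy θ ∈ (0,1), and epoch length K = θ^{−1}. Then the algorithm terminates after at most n iterations in total (across all restarts) and outputs a point ẑ with ‖∇F(ẑ)‖ ≤ 45·ε. -/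
/-!
Within an epoch, convexity of `f`, the descent lemma for `g` and weak convexity of `g` make
`F (x k) + β ‖x k - x (k - 1)‖²` a Lyapunov function that drops by `2 L θ ‖x (k + 1) - x k‖²`
per step. A restart happens only once `k ∑ ‖x (t + 1) - x t‖² > B²`, so every restarted epoch
lowers `F` by at least `2 L θ² B²`; with `K = 1 / θ` and the choice of `ε` this caps the total
number of iterations at `n`.

In the final epoch all iterates stay within `B` of each other, so on the averaging window the
gradients are affine up to `O(ρ B²)` by the Lipschitz Hessians. Summing the optimality conditions
`(z k - x (k + 1)) / η = ∇f (x (k + 1)) + ∇g (z k)` over `k ≤ K₀` telescopes to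
`(x K₀ - x (K₀ + 1)) + θ (x 0 - x K₀)`, which is `O(θ B)` because `K₀` is a shortest step in the
second half of the epoch; dividing by `K₀ + 1 ≥ 1 / (2 θ)` gives
`‖∇F ẑ‖ = O(L B θ² + ρ B²) = O(ε)`.
-/

open Finset Metric
open scoped RealInnerProductSpace

theorem norm_image_sub_sub_fderiv_le {E F : Type*} [NormedAddCommGroup E] [NormedSpace ℝ E]
    [NormedAddCommGroup F] [NormedSpace ℝ F] {G : E → F} (hG : Differentiable ℝ G)
    {C : ℝ} (hC : 0 ≤ C) (hG' : ∀ p q, ‖fderiv ℝ G p - fderiv ℝ G q‖ ≤ C * ‖p - q‖) (a b : E) :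
    ‖G b - G a - fderiv ℝ G a (b - a)‖ ≤ C * ‖b - a‖ ^ 2 := by
  have hball : ∀ p ∈ closedBall a ‖b - a‖, ‖fderiv ℝ G p - fderiv ℝ G a‖ ≤ C * ‖b - a‖ :=
    fun p hp ↦ (hG' p a).trans (mul_le_mul_of_nonneg_left (mem_closedBall_iff_norm.1 hp) hC)
  calc ‖G b - G a - fderiv ℝ G a (b - a)‖ ≤ C * ‖b - a‖ * ‖b - a‖ :=
        (convex_closedBall a _).norm_image_sub_le_of_norm_fderiv_le' (fun p _ ↦ hG p) hball
          (mem_closedBall_self (norm_nonneg _)) (by simp [dist_eq_norm])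
    _ = C * ‖b - a‖ ^ 2 := by ring

theorem ConvexOn.add_fderiv_sub_le {E : Type*} [NormedAddCommGroup E] [NormedSpace ℝ E]
    {u : E → ℝ} (hc : ConvexOn ℝ Set.univ u) {a : E} (hu : DifferentiableAt ℝ u a) (b : E) :
    u a + fderiv ℝ u a (b - a) ≤ u b := by
  have hline : HasDerivAt (u ∘ AffineMap.lineMap (k := ℝ) a b) (fderiv ℝ u a (b - a)) 0 := by
    refine HasFDerivAt.comp_hasDerivAt (0 : ℝ) ?_ AffineMap.hasDerivAt_lineMap
    simpa using hu.hasFDerivAt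
  have hslope := (hc.comp_affineMap (AffineMap.lineMap a b)).le_slope_of_hasDerivAt
    (Set.mem_univ 0) (Set.mem_univ 1) one_pos hline
  simp only [slope_def_field, Function.comp_apply, AffineMap.lineMap_apply_zero,
    AffineMap.lineMap_apply_one, sub_zero, div_one] at hslope
  linarith

theorem norm_sum_sub_fderiv_sum_le {E F : Type*} [NormedAddCommGroup E] [NormedSpace ℝ E]
    [NormedAddCommGroup F] [NormedSpace ℝ F] {G : E → F} (hG : Differentiable ℝ G)
    {C : ℝ} (hC : 0 ≤ C) (hG' : ∀ p q, ‖fderiv ℝ G p - fderiv ℝ G q‖ ≤ C * ‖p - q‖)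
    {p : ℕ → E} {c : E} {r : ℝ} {n : ℕ} (hp : ∀ k < n, ‖p k - c‖ ≤ r) :
    ‖∑ k ∈ range n, G (p k) - (n : ℝ) • G c - fderiv ℝ G c (∑ k ∈ range n, (p k - c))‖
      ≤ n * (C * r ^ 2) := by
  have hsum : ∑ k ∈ range n, G (p k) - (n : ℝ) • G c - fderiv ℝ G c (∑ k ∈ range n, (p k - c))
      = ∑ k ∈ range n, (G (p k) - G c - fderiv ℝ G c (p k - c)) := by
    rw [map_sum, sum_sub_distrib, sum_sub_distrib, sum_const, card_range, Nat.cast_smul_eq_nsmul]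
  rw [hsum]
  calc _ ≤ ∑ k ∈ range n, ‖G (p k) - G c - fderiv ℝ G c (p k - c)‖ := norm_sum_le _ _
    _ ≤ ∑ _k ∈ range n, C * r ^ 2 := sum_le_sum fun k hk ↦
        (norm_image_sub_sub_fderiv_le hG hC hG' c (p k)).trans
          (by gcongr; exact hp k (mem_range.1 hk))
    _ = n * (C * r ^ 2) := by simp

theorem norm_fderiv_le_of_norm_sub_le {E F : Type*} [NormedAddCommGroup E] [NormedSpace ℝ E]
    [NormedAddCommGroup F] [NormedSpace ℝ F] {G : E → F} {C : ℝ} (hC : 0 ≤ C)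
    (hG : ∀ p q, ‖G p - G q‖ ≤ C * ‖p - q‖) (a : E) : ‖fderiv ℝ G a‖ ≤ C :=
  norm_fderiv_le_of_lipschitz ℝ (C := ⟨C, hC⟩) <| LipschitzWith.of_dist_le_mul fun p q ↦ by
    rw [dist_eq_norm, dist_eq_norm]
    exact hG p q

theorem nonneg_of_norm_sub_le_mul {E F : Type*} [NormedAddCommGroup E] [Nontrivial E]
    [SeminormedAddCommGroup F] {G : E → F} {C : ℝ} (hG : ∀ p q, ‖G p - G q‖ ≤ C * ‖p - q‖) :
    0 ≤ C := by
  obtain ⟨v, hv⟩ := exists_ne (0 : E)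
  have := (norm_nonneg _).trans (hG v 0)
  rw [sub_zero] at this
  exact nonneg_of_mul_nonneg_left this (norm_pos_iff.2 hv)

section Gradient

variable {E : Type*} [NormedAddCommGroup E] [InnerProductSpace ℝ E] [CompleteSpace E]

theorem norm_fderiv_sub_fderiv_eq (u : E → ℝ) (p q : E) :
    ‖fderiv ℝ u p - fderiv ℝ u q‖ = ‖gradient u p - gradient u q‖ := by
  rw [← toDual_gradient, ← toDual_gradient, ← map_sub, LinearIsometryEquiv.norm_map]

theorem le_add_inner_gradient_add_of_lipschitz_gradient {u : E → ℝ} (hu : Differentiable ℝ u)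
    {C : ℝ} (hC : 0 ≤ C) (hu' : ∀ p q, ‖gradient u p - gradient u q‖ ≤ C * ‖p - q‖) (a b : E) :
    u b ≤ u a + ⟪gradient u a, b - a⟫ + C * ‖b - a‖ ^ 2 := by
  have h := norm_image_sub_sub_fderiv_le hu hC
    (fun p q ↦ (norm_fderiv_sub_fderiv_eq u p q).trans_le (hu' p q)) a b
  rw [Real.norm_eq_abs, abs_le] at h
  rw [inner_gradient_left]
  linarith [h.2]

theorem add_inner_gradient_sub_le_of_convexOn_add_sq {u : E → ℝ} {ν : ℝ}
    (hc : ConvexOn ℝ Set.univ (fun w ↦ u w + (ν / 2) * ‖w‖ ^ 2))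
    {a : E} (hu : DifferentiableAt ℝ u a) (b : E) :
    u a + ⟪gradient u a, b - a⟫ - (ν / 2) * ‖b - a‖ ^ 2 ≤ u b := by
  have hderiv : HasFDerivAt (fun w ↦ u w + (ν / 2) * ‖w‖ ^ 2)
      (fderiv ℝ u a + (ν / 2) • (2 • innerSL ℝ a)) a :=
    hu.hasFDerivAt.add ((hasStrictFDerivAt_norm_sq a).hasFDerivAt.const_mul (ν / 2))
  have h := hc.add_fderiv_sub_le hderiv.differentiableAt b
  rw [hderiv.fderiv] at h
  have hsq : ‖b - a‖ ^ 2 = ‖b‖ ^ 2 - ‖a‖ ^ 2 - 2 * ⟪a, b - a⟫ := by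
    rw [inner_sub_right, real_inner_self_eq_norm_sq, norm_sub_sq_real, real_inner_comm]; ring
  simp only [add_apply, smul_apply, innerSL_apply_apply,
    smul_eq_mul, nsmul_eq_mul] at h
  rw [inner_gradient_left, hsq]
  push_cast at h
  linarith

theorem gradient_fun_add {f g : E → ℝ} {a : E} (hf : DifferentiableAt ℝ f a)
    (hg : DifferentiableAt ℝ g a) :
    gradient (fun w ↦ f w + g w) a = gradient f a + gradient g a := by
  simp only [gradient, fderiv_fun_add hf hg, map_add]

end Gradient

section Sequences

variable {E : Type*} [NormedAddCommGroup E] {x : ℕ → E} {θ B : ℝ}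

theorem norm_sub_le_of_mul_sum_sq_le {i j : ℕ} (hB : 0 ≤ B) (hij : i ≤ j)
    (h : (j : ℝ) * ∑ t ∈ range j, ‖x (t + 1) - x t‖ ^ 2 ≤ B ^ 2) : ‖x j - x i‖ ≤ B := by
  have htriangle : ‖x j - x i‖ ≤ ∑ t ∈ Ico i j, ‖x (t + 1) - x t‖ := by
    rw [← sum_Ico_sub x hij]
    exact norm_sum_le _ _
  have hcs : (∑ t ∈ Ico i j, ‖x (t + 1) - x t‖) ^ 2 ≤ B ^ 2 :=
    calc (∑ t ∈ Ico i j, ‖x (t + 1) - x t‖) ^ 2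
        ≤ #(Ico i j) * ∑ t ∈ Ico i j, ‖x (t + 1) - x t‖ ^ 2 := sq_sum_le_card_mul_sum_sq
      _ ≤ j * ∑ t ∈ range j, ‖x (t + 1) - x t‖ ^ 2 := by
        gcongr
        · exact_mod_cast (Nat.card_Ico i j).trans_le (Nat.sub_le j i)
        · intro t ht; simp only [mem_Ico, mem_range] at ht ⊢; exact ht.2
      _ ≤ B ^ 2 := h
  exact htriangle.trans ((pow_le_pow_iff_left₀ (by positivity) hB two_ne_zero).1 hcs)

theorem mul_sq_norm_sub_le_of_mul_sum_sq_le {K t : ℕ} (ht : t < K)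
    (h : (K : ℝ) * ∑ s ∈ range K, ‖x (s + 1) - x s‖ ^ 2 ≤ B ^ 2) :
    (K : ℝ) * ‖x (t + 1) - x t‖ ^ 2 ≤ B ^ 2 := by
  refine le_trans ?_ h
  gcongr
  exact single_le_sum (f := fun s ↦ ‖x (s + 1) - x s‖ ^ 2) (fun _ _ ↦ by positivity)
    (mem_range.2 ht)

/-- The `K - K / 2 ≥ K / 2` steps with index in `[K / 2, K)` are all at least as long as
step `K₀`. -/
theorem sq_mul_sq_norm_sub_le_of_minimal_step {K K₀ : ℕ}
    (hmin : ∀ k, K / 2 ≤ k → k ≤ K - 1 → ‖x (K₀ + 1) - x K₀‖ ≤ ‖x (k + 1) - x k‖)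
    (h : (K : ℝ) * ∑ s ∈ range K, ‖x (s + 1) - x s‖ ^ 2 ≤ B ^ 2) :
    (K : ℝ) ^ 2 * ‖x (K₀ + 1) - x K₀‖ ^ 2 ≤ 2 * B ^ 2 := by
  set d := ‖x (K₀ + 1) - x K₀‖
  have hcount : ((K - K / 2 : ℕ) : ℝ) * d ^ 2 ≤ ∑ s ∈ range K, ‖x (s + 1) - x s‖ ^ 2 :=
    calc ((K - K / 2 : ℕ) : ℝ) * d ^ 2 = #(Ico (K / 2) K) • d ^ 2 := by simp
      _ ≤ ∑ s ∈ Ico (K / 2) K, ‖x (s + 1) - x s‖ ^ 2 := by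
        refine card_nsmul_le_sum _ _ _ fun k hk ↦ ?_
        rw [mem_Ico] at hk
        exact pow_le_pow_left₀ (norm_nonneg _) (hmin k hk.1 (by omega)) 2
      _ ≤ ∑ s ∈ range K, ‖x (s + 1) - x s‖ ^ 2 :=
        sum_le_sum_of_subset_of_nonneg (fun s hs ↦ by simp_all) (fun _ _ _ ↦ by positivity)
  have hhalf : (K : ℝ) ≤ 2 * ((K - K / 2 : ℕ) : ℝ) := by norm_cast; omega
  calc (K : ℝ) ^ 2 * d ^ 2 ≤ 2 * (K * (((K - K / 2 : ℕ) : ℝ) * d ^ 2)) := by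
        nlinarith [mul_le_mul_of_nonneg_right hhalf (by positivity : (0 : ℝ) ≤ K * d ^ 2)]
    _ ≤ 2 * B ^ 2 := by nlinarith [mul_le_mul_of_nonneg_left hcount (Nat.cast_nonneg K)]

theorem norm_sub_le_of_forall_mul_sum_sq_le {K : ℕ} (hB : 0 ≤ B)
    (h : ∀ k, 1 ≤ k → k ≤ K → (k : ℝ) * ∑ t ∈ range k, ‖x (t + 1) - x t‖ ^ 2 ≤ B ^ 2)
    {i j : ℕ} (hi : i ≤ K) (hj : j ≤ K) : ‖x j - x i‖ ≤ B := by
  have h' : ∀ k ≤ K, (k : ℝ) * ∑ t ∈ range k, ‖x (t + 1) - x t‖ ^ 2 ≤ B ^ 2 := fun k hk ↦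
    k.eq_zero_or_pos.elim (fun hk0 ↦ by simp [hk0, sq_nonneg]) (fun hk0 ↦ h k hk0 hk)
  rcases le_total i j with hij | hji
  · exact norm_sub_le_of_mul_sum_sq_le hB hij (h' j hj)
  · exact norm_sub_rev (x j) (x i) ▸ norm_sub_le_of_mul_sum_sq_le hB hji (h' i hi)

theorem one_sub_mul_norm_sub_pred_le {K j : ℕ} (hθ0 : 0 < θ) (hθ1 : θ ≤ 1)
    (hB : 0 ≤ B) (hK : (K : ℝ) = θ⁻¹)
    (h : (K : ℝ) * ∑ s ∈ range K, ‖x (s + 1) - x s‖ ^ 2 ≤ B ^ 2) (hj : j ≤ K) :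
    (1 - θ) * ‖x j - x (j - 1)‖ ≤ B / 2 := by
  rcases j with _ | t
  · simp only [Nat.zero_sub, sub_self, norm_zero, mul_zero]
    positivity
  have hstep := mul_sq_norm_sub_le_of_mul_sum_sq_le (Nat.succ_le_iff.1 hj) h
  rw [hK, inv_mul_le_iff₀ hθ0] at hstep
  rw [Nat.add_sub_cancel]
  have hθθ : (1 - θ) ^ 2 * θ ≤ 1 / 4 := by nlinarith [sq_nonneg (1 - 2 * θ)]
  have hsq : ((1 - θ) * ‖x (t + 1) - x t‖) ^ 2 ≤ (B / 2) ^ 2 := by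
    rw [mul_pow]
    nlinarith [mul_le_mul_of_nonneg_left hstep (sq_nonneg (1 - θ)), sq_nonneg B]
  exact (pow_le_pow_iff_left₀ (mul_nonneg (by linarith) (norm_nonneg _)) (by positivity)
    two_ne_zero).1 hsq

variable [NormedSpace ℝ E] {z : ℕ → E}

theorem norm_smul_sum_sub_le {v : ℕ → E} {c : E} {R : ℝ} {n : ℕ} (hn : 0 < n)
    (h : ∀ k < n, ‖v k - c‖ ≤ R) : ‖(n : ℝ)⁻¹ • ∑ k ∈ range n, v k - c‖ ≤ R := by
  have hn' : (0 : ℝ) < n := by exact_mod_cast hn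
  have hsum : (n : ℝ)⁻¹ • ∑ k ∈ range n, v k - c = (n : ℝ)⁻¹ • ∑ k ∈ range n, (v k - c) := by
    rw [sum_sub_distrib, sum_const, card_range, smul_sub, ← Nat.cast_smul_eq_nsmul ℝ, smul_smul,
      inv_mul_cancel₀ hn'.ne', one_smul]
  rw [hsum, norm_smul, norm_inv, Real.norm_natCast, inv_mul_le_iff₀ hn']
  calc ‖∑ k ∈ range n, (v k - c)‖ ≤ ∑ k ∈ range n, ‖v k - c‖ := norm_sum_le _ _
    _ ≤ ∑ _k ∈ range n, R := sum_le_sum fun k hk ↦ h k (mem_range.1 hk)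
    _ = n * R := by simp

theorem sum_inertial_sub_succ (hz : ∀ k, z k = x k + (1 - θ) • (x k - x (k - 1))) (n : ℕ) :
    ∑ k ∈ range (n + 1), (z k - x (k + 1)) = (x n - x (n + 1)) + θ • (x 0 - x n) := by
  induction n with
  | zero => simp [hz 0]
  | succ n ih =>
    rw [sum_range_succ, ih, hz (n + 1), Nat.add_sub_cancel]
    module

theorem norm_inertial_sub_le (hθ1 : θ ≤ 1) (hz : ∀ k, z k = x k + (1 - θ) • (x k - x (k - 1)))
    (j : ℕ) (c : E) : ‖z j - c‖ ≤ ‖x j - c‖ + (1 - θ) * ‖x j - x (j - 1)‖ := by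
  rw [hz j, add_sub_right_comm]
  refine (norm_add_le _ _).trans_eq ?_
  rw [norm_smul, Real.norm_of_nonneg (sub_nonneg.2 hθ1)]

theorem norm_sub_inertial_average_le {n : ℕ} {zbar : E} (hθ1 : θ ≤ 1)
    (hz : ∀ k, z k = x k + (1 - θ) • (x k - x (k - 1)))
    (hdist : ∀ i j, i ≤ n + 1 → j ≤ n + 1 → ‖x j - x i‖ ≤ B)
    (hmom : ∀ j ≤ n, (1 - θ) * ‖x j - x (j - 1)‖ ≤ B / 2)
    (hzbar : zbar = ((n : ℝ) + 1)⁻¹ • ∑ k ∈ range (n + 1), z k) :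
    (∀ k < n + 1, ‖x (k + 1) - zbar‖ ≤ 3 / 2 * B) ∧ ∀ k < n + 1, ‖z k - zbar‖ ≤ 2 * B := by
  have hzbar' : zbar = ((n + 1 : ℕ) : ℝ)⁻¹ • ∑ k ∈ range (n + 1), z k := by
    rw [hzbar, Nat.cast_succ]
  have hnear : ∀ j < n + 1, ∀ c, ‖z j - c‖ ≤ ‖x j - c‖ + B / 2 := fun j hj c ↦
    (norm_inertial_sub_le hθ1 hz j c).trans (by linarith [hmom j (by omega)])
  constructor
  · intro k hk
    rw [norm_sub_rev, hzbar']
    refine norm_smul_sum_sub_le n.succ_pos fun j hj ↦ (hnear j hj _).trans ?_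
    linarith [hdist (k + 1) j (by omega) (by omega)]
  · intro k hk
    rw [norm_sub_rev, hzbar']
    refine norm_smul_sum_sub_le n.succ_pos fun j hj ↦ (hnear j hj _).trans ?_
    rw [norm_sub_rev]
    linarith [hnear k hk (x j), hdist j k (by omega) (by omega)]

theorem norm_sum_inertial_sub_succ_le {K K₀ : ℕ} (hθ0 : 0 < θ) (hB : 0 ≤ B)
    (hz : ∀ k, z k = x k + (1 - θ) • (x k - x (k - 1))) (hK : (K : ℝ) = θ⁻¹)
    (hsum : (K : ℝ) * ∑ s ∈ range K, ‖x (s + 1) - x s‖ ^ 2 ≤ B ^ 2)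
    (hmin : ∀ k, K / 2 ≤ k → k ≤ K - 1 → ‖x (K₀ + 1) - x K₀‖ ≤ ‖x (k + 1) - x k‖)
    (hdist : ‖x K₀ - x 0‖ ≤ B) :
    ‖∑ k ∈ range (K₀ + 1), (z k - x (k + 1))‖ ≤ (1 + Real.sqrt 2) * θ * B := by
  have hsq := sq_mul_sq_norm_sub_le_of_minimal_step hmin hsum
  rw [hK, inv_pow, inv_mul_le_iff₀ (by positivity)] at hsq
  have hlast : ‖x K₀ - x (K₀ + 1)‖ ≤ Real.sqrt 2 * θ * B := by
    rw [norm_sub_rev]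
    refine (pow_le_pow_iff_left₀ (norm_nonneg _) (by positivity) two_ne_zero).1 ?_
    rw [mul_pow, mul_pow, Real.sq_sqrt zero_le_two]
    linarith
  have hfirst : ‖θ • (x 0 - x K₀)‖ ≤ θ * B := by
    rw [norm_smul, Real.norm_of_nonneg hθ0.le, norm_sub_rev]
    exact mul_le_mul_of_nonneg_left hdist hθ0.le
  rw [sum_inertial_sub_succ hz]
  linarith [norm_add_le (x K₀ - x (K₀ + 1)) (θ • (x 0 - x K₀))]

theorem risp_final_epoch_localization {K K₀ : ℕ} {zbar : E} (hB : 0 ≤ B)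
    (hθ0 : 0 < θ) (hθ1 : θ < 1) (hK : (K : ℝ) = θ⁻¹)
    (hz : ∀ k, z k = x k + (1 - θ) • (x k - x (k - 1)))
    (hfinal : ∀ k, 1 ≤ k → k ≤ K →
      (k : ℝ) * ∑ t ∈ range k, ‖x (t + 1) - x t‖ ^ 2 ≤ B ^ 2)
    (hK₀ub : K₀ ≤ K - 1)
    (hK₀min : ∀ k, K / 2 ≤ k → k ≤ K - 1 → ‖x (K₀ + 1) - x K₀‖ ≤ ‖x (k + 1) - x k‖)
    (hzbar : zbar = ((K₀ : ℝ) + 1)⁻¹ • ∑ k ∈ range (K₀ + 1), z k) :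
    (∀ k < K₀ + 1, ‖x (k + 1) - zbar‖ ≤ 3 / 2 * B) ∧ (∀ k < K₀ + 1, ‖z k - zbar‖ ≤ 2 * B)
      ∧ ‖∑ k ∈ range (K₀ + 1), (z k - x (k + 1))‖ ≤ (1 + Real.sqrt 2) * θ * B := by
  have hK1 : 1 ≤ K := by
    have : (1 : ℝ) < K := hK ▸ one_lt_inv_iff₀.2 ⟨hθ0, hθ1⟩
    exact_mod_cast this.le
  have hsumK := hfinal K hK1 le_rfl
  have hdist : ∀ i j, i ≤ K → j ≤ K → ‖x j - x i‖ ≤ B := fun i j hi hj ↦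
    norm_sub_le_of_forall_mul_sum_sq_le hB hfinal hi hj
  obtain ⟨hxr, hzr⟩ := norm_sub_inertial_average_le hθ1.le hz
    (fun i j hi hj ↦ hdist i j (by omega) (by omega))
    (fun j hj ↦ one_sub_mul_norm_sub_pred_le hθ0 hθ1.le hB hK hsumK (by omega)) hzbar
  exact ⟨hxr, hzr, norm_sum_inertial_sub_succ_le hθ0 hB hz hK hsumK hK₀min
    (hdist 0 K₀ (by omega) (by omega))⟩

end Sequences

section Parameters

variable {L ρ ε η θ ν B ΔF : ℝ}

theorem rpow_div_seven_pow_seven {y : ℝ} (hy : 0 ≤ y) (k : ℝ) :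
    (y ^ (k / 7)) ^ 7 = y ^ k := by
  rw [← Real.rpow_mul_natCast hy]; norm_num

theorem risp_theta_pow_four (hL : 0 < L) (hερ : 0 ≤ ε * ρ) (hη : η = 1 / (8 * L))
    (hθ : θ = 4 * (ε * ρ * η ^ 2) ^ ((1 : ℝ) / 4)) : L ^ 2 * θ ^ 4 = 4 * ε * ρ := by
  have h := Real.rpow_inv_natCast_pow (x := ε * ρ * η ^ 2) (n := 4) (by positivity) (by norm_num)
  rw [hθ, mul_pow, show (1 : ℝ) / 4 = ((4 : ℕ) : ℝ)⁻¹ by norm_num, h, hη]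
  field_simp
  ring

theorem risp_nu_le (hL : 0 < L) (hερ : 0 ≤ ε * ρ) (hθ : 0 ≤ θ) (hθ4 : L ^ 2 * θ ^ 4 = 4 * ε * ρ)
    (hν : ν ≤ 8 * (ε * ρ) ^ ((1 : ℝ) / 4) * Real.sqrt L) : ν ≤ 6 * L * θ := by
  have hq : ((ε * ρ) ^ ((1 : ℝ) / 4)) ^ 4 = ε * ρ := by
    rw [show (1 : ℝ) / 4 = ((4 : ℕ) : ℝ)⁻¹ by norm_num]
    exact Real.rpow_inv_natCast_pow hερ (by norm_num)
  have hsqrt : Real.sqrt L ^ 4 = L ^ 2 := by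
    rw [show 4 = 2 * 2 by rfl, pow_mul, Real.sq_sqrt hL.le]
  refine hν.trans ((pow_le_pow_iff_left₀ (by positivity) (by positivity) four_ne_zero).1 ?_)
  rw [mul_pow, mul_pow, hq, hsqrt]
  nlinarith [pow_nonneg hθ 4, pow_pos hL 4]

theorem risp_epsilon_lower_bounds (hL : 0 < L) (hρ : 0 < ρ) (hΔF : 0 ≤ ΔF) {n : ℕ} (hn : 1 ≤ n)
    (hε : ε = ΔF ^ ((4 : ℝ) / 7) * (2 * L) ^ ((2 : ℝ) / 7) * ρ ^ ((1 : ℝ) / 7)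
          * (n : ℝ) ^ (-(4 : ℝ) / 7)
          + 4 * L ^ 2 * ρ⁻¹ * (n : ℝ) ^ (-(4 : ℝ))) :
    ΔF ^ 4 * (4 * L ^ 2 * ρ) ≤ ε ^ 7 * n ^ 4 ∧ 4 * L ^ 2 ≤ ε * ρ * n ^ 4 := by
  have hn0 : (0 : ℝ) < n := by exact_mod_cast hn
  have hn4 : (n : ℝ) ^ (-(4 : ℝ)) = ((n : ℝ) ^ 4)⁻¹ := by
    rw [Real.rpow_neg hn0.le, Real.rpow_ofNat]
  set a := ΔF ^ ((4 : ℝ) / 7) * (2 * L) ^ ((2 : ℝ) / 7) * ρ ^ ((1 : ℝ) / 7)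
    * (n : ℝ) ^ (-(4 : ℝ) / 7)
  have ha : 0 ≤ a := by positivity
  have ha7 : a ^ 7 = ΔF ^ 4 * (4 * L ^ 2 * ρ) / n ^ 4 := by
    simp only [a, mul_pow, rpow_div_seven_pow_seven hΔF, rpow_div_seven_pow_seven hρ.le,
      rpow_div_seven_pow_seven (by positivity : (0 : ℝ) ≤ 2 * L),
      rpow_div_seven_pow_seven hn0.le, hn4, Real.rpow_one, Real.rpow_ofNat]
    ring
  have hb : 0 ≤ 4 * L ^ 2 * ρ⁻¹ * ((n : ℝ) ^ 4)⁻¹ := by positivity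
  rw [hn4] at hε
  constructor
  · have h7 : a ^ 7 ≤ ε ^ 7 := pow_le_pow_left₀ ha (by linarith) 7
    rwa [ha7, div_le_iff₀ (by positivity)] at h7
  · calc 4 * L ^ 2 = 4 * L ^ 2 * ρ⁻¹ * ((n : ℝ) ^ 4)⁻¹ * (ρ * n ^ 4) := by field_simp
      _ ≤ ε * (ρ * n ^ 4) := by gcongr; linarith
      _ = ε * ρ * n ^ 4 := by ring

theorem risp_parameters (hL : 0 < L) (hρ : 0 < ρ) (hΔF : 0 ≤ ΔF) {n : ℕ} (hn : 1 ≤ n)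
    (hε : ε = ΔF ^ ((4 : ℝ) / 7) * (2 * L) ^ ((2 : ℝ) / 7) * ρ ^ ((1 : ℝ) / 7)
          * (n : ℝ) ^ (-(4 : ℝ) / 7)
          + 4 * L ^ 2 * ρ⁻¹ * (n : ℝ) ^ (-(4 : ℝ)))
    (hν : ν ≤ 8 * (ε * ρ) ^ ((1 : ℝ) / 4) * Real.sqrt L) (hη : η = 1 / (8 * L))
    (hB : B = Real.sqrt (ε / (4 * ρ))) (hθ : θ = 4 * (ε * ρ * η ^ 2) ^ ((1 : ℝ) / 4))
    (hθ0 : 0 < θ) :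
    0 < B ∧ ε = L * B * θ ^ 2 ∧ 4 * ρ * B ^ 2 = ε ∧ ν ≤ 6 * L * θ ∧ 2 ≤ θ * n
      ∧ ΔF ≤ n * L * B ^ 2 * θ ^ 3 := by
  obtain ⟨hΔFε, hLε⟩ := risp_epsilon_lower_bounds hL hρ hΔF hn hε
  have hn0 : (0 : ℝ) < n := by exact_mod_cast hn
  have hε0 : 0 < ε := by rw [hε]; positivity
  have hθ4 := risp_theta_pow_four hL (by positivity) hη hθ
  have hB2 : 4 * ρ * B ^ 2 = ε := by rw [hB, Real.sq_sqrt (by positivity)]; field_simp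
  have hB0 : 0 < B := hB ▸ Real.sqrt_pos.2 (by positivity)
  have hεLB : ε = L * B * θ ^ 2 :=
    (sq_eq_sq₀ hε0.le (by positivity)).1 (by linear_combination (-ε) * hB2 + (-B ^ 2) * hθ4)
  have hρB : 4 * ρ * B = L * θ ^ 2 :=
    mul_right_cancel₀ hB0.ne' (by linear_combination hB2 + hεLB)
  refine ⟨hB0, hεLB, hB2, risp_nu_le hL (by positivity) hθ0.le hθ4 hν, ?_, ?_⟩
  · have h16 : L ^ 2 * 2 ^ 4 ≤ L ^ 2 * (θ * n) ^ 4 := by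
      rw [mul_pow, ← mul_assoc, hθ4]
      linarith
    exact (pow_le_pow_iff_left₀ (by norm_num) (by positivity) four_ne_zero).1
      (le_of_mul_le_mul_left h16 (by positivity))
  · have h4 : ΔF ^ 4 * (4 * L ^ 2 * ρ) ≤ (n * L * B ^ 2 * θ ^ 3) ^ 4 * (4 * L ^ 2 * ρ) := by
      refine hΔFε.trans (le_of_eq ?_)
      rw [hεLB]
      linear_combination (-(n : ℝ) ^ 4 * L ^ 6 * B ^ 7 * θ ^ 12) * hρB
    exact (pow_le_pow_iff_left₀ hΔF (by positivity) four_ne_zero).1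
      (le_of_mul_le_mul_right h4 (by positivity))

theorem risp_total_iterations_le {L B θ ΔF : ℝ} {N K n : ℕ} {len : ℕ → ℕ} (hL : 0 < L)
    (hB : 0 < B) (hθ0 : 0 < θ) (hK : (K : ℝ) = θ⁻¹) (hlen_le : ∀ i < N, len i ≤ K)
    (hN : N * (2 * L * θ ^ 2 * B ^ 2) ≤ ΔF) (hΔF : ΔF ≤ n * L * B ^ 2 * θ ^ 3)
    (hnθ : 2 ≤ θ * n) :
    (∑ i ∈ range N, len i) + K ≤ n := by
  have hNθ : (N : ℝ) * θ⁻¹ ≤ n / 2 := by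
    have : (N : ℝ) * (2 * L * θ ^ 2 * B ^ 2) ≤ (n * θ / 2) * (2 * L * θ ^ 2 * B ^ 2) := by
      linarith
    calc (N : ℝ) * θ⁻¹ ≤ (n * θ / 2) * θ⁻¹ := by
          gcongr
          exact le_of_mul_le_mul_right this (by positivity)
      _ = n / 2 := by field_simp
  have hKn : θ⁻¹ ≤ n / 2 := by
    rw [inv_le_iff_one_le_mul₀ hθ0]
    linarith
  have hsum : ∑ i ∈ range N, len i ≤ N * K := by
    simpa using sum_le_card_nsmul (range N) len K fun i hi ↦ hlen_le i (mem_range.1 hi)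
  have : ((∑ i ∈ range N, len i : ℕ) : ℝ) + K ≤ n := by
    have := (Nat.cast_le (α := ℝ)).2 hsum
    push_cast at this ⊢
    rw [hK] at this ⊢
    linarith
  exact_mod_cast this

end Parameters

section RispProx

variable {E : Type*} [NormedAddCommGroup E] [InnerProductSpace ℝ E] [CompleteSpace E]
  {f g : E → ℝ} {L Lg ν θ η : ℝ} {x z : ℕ → E}

theorem add_le_add_inner_gradient_of_convexOn_of_weaklyConvex (hfd : Differentiable ℝ f)
    (hgd : Differentiable ℝ g) (hfconv : ConvexOn ℝ Set.univ f) (hLg : 0 ≤ Lg)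
    (hglip : ∀ a b, ‖gradient g a - gradient g b‖ ≤ Lg * ‖a - b‖)
    (hweak : ConvexOn ℝ Set.univ (fun w ↦ g w + (ν / 2) * ‖w‖ ^ 2)) (x z y : E) :
    f y + g y ≤ f x + g x + ⟪gradient f y + gradient g z, y - x⟫
      + Lg * ‖y - z‖ ^ 2 + (ν / 2) * ‖x - z‖ ^ 2 := by
  have hf : f y + fderiv ℝ f y (x - y) ≤ f x := hfconv.add_fderiv_sub_le (hfd y) x
  have hg_upper := le_add_inner_gradient_add_of_lipschitz_gradient hgd hLg hglip z y
  have hg_lower := add_inner_gradient_sub_le_of_convexOn_add_sq hweak (hgd z) x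
  have hsplit : ⟪gradient g z, y - x⟫ = ⟪gradient g z, y - z⟫ - ⟪gradient g z, x - z⟫ := by
    rw [← inner_sub_right, sub_sub_sub_cancel_right]
  rw [← neg_sub y x, map_neg, ← inner_gradient_left] at hf
  rw [inner_add_left, hsplit]
  linarith

/-- The weight `β` of the Lyapunov function `F (x k) + β * ‖x k - x (k - 1)‖ ^ 2` of RISP-Prox
with step `η = 1 / (8 * L)`. -/
noncomputable def rispLyapunovWeight (L Lg ν θ : ℝ) : ℝ :=
  (8 * L - 2 * Lg) * (1 - θ) / 2 + (Lg + max ν 0 / 2) * (1 - θ) ^ 2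

theorem rispLyapunovWeight_nonneg (hLgL : Lg ≤ L) (hLg : 0 ≤ Lg) (hθ1 : θ ≤ 1) :
    0 ≤ rispLyapunovWeight L Lg ν θ := by
  unfold rispLyapunovWeight
  have : 0 ≤ 8 * L - 2 * Lg := by linarith
  have : 0 ≤ 1 - θ := by linarith
  positivity

theorem risp_step_lyapunov_descent (hL : 0 < L) (hLg : 0 ≤ Lg) (hLgL : Lg ≤ L) (hθ0 : 0 < θ)
    (hθ1 : θ < 1) (hν : ν ≤ 6 * L * θ) (hη : η = 1 / (8 * L))
    (hfd : Differentiable ℝ f) (hgd : Differentiable ℝ g) (hfconv : ConvexOn ℝ Set.univ f)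
    (hglip : ∀ a b, ‖gradient g a - gradient g b‖ ≤ Lg * ‖a - b‖)
    (hweak : ConvexOn ℝ Set.univ (fun w ↦ g w + (ν / 2) * ‖w‖ ^ 2)) {x₀ x₁ x₂ z : E}
    (hz : z = x₁ + (1 - θ) • (x₁ - x₀))
    (hstep : (1 / η) • (z - x₂) = gradient f x₂ + gradient g z) :
    f x₂ + g x₂ + rispLyapunovWeight L Lg ν θ * ‖x₂ - x₁‖ ^ 2
      ≤ f x₁ + g x₁ + rispLyapunovWeight L Lg ν θ * ‖x₁ - x₀‖ ^ 2 - 2 * L * θ * ‖x₂ - x₁‖ ^ 2 := by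
  have h := add_le_add_inner_gradient_of_convexOn_of_weaklyConvex hfd hgd hfconv hLg hglip
    hweak x₁ z x₂
  set p := x₂ - x₁
  set q := x₁ - x₀
  have hzx : z - x₂ = (1 - θ) • q - p := by rw [hz]; module
  have hxz : x₂ - z = p - (1 - θ) • q := by rw [hz]; module
  have hxz' : x₁ - z = -((1 - θ) • q) := by rw [hz]; module
  rw [← hstep, hη, one_div_one_div, real_inner_smul_left, hzx, hxz, hxz', norm_neg,
    norm_sub_sq_real, norm_smul, inner_sub_left, real_inner_smul_left, real_inner_smul_right,
    real_inner_self_eq_norm_sq, Real.norm_eq_abs, abs_of_pos (by linarith : 0 < 1 - θ),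
    real_inner_comm p q] at h
  have hpq : 2 * ⟪p, q⟫ ≤ ‖p‖ ^ 2 + ‖q‖ ^ 2 := by
    nlinarith [norm_sub_sq_real p q, sq_nonneg ‖p - q‖]
  have hc : 0 ≤ (8 * L - 2 * Lg) * (1 - θ) := mul_nonneg (by linarith) (by linarith)
  have hcross := mul_le_mul_of_nonneg_left hpq hc
  have hνpos : ν * ((1 - θ) ^ 2 * ‖q‖ ^ 2) ≤ max ν 0 * ((1 - θ) ^ 2 * ‖q‖ ^ 2) :=
    mul_le_mul_of_nonneg_right (le_max_left _ _) (by positivity)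
  have hνθ : max ν 0 / 2 * (1 - θ) ^ 2 ≤ 3 * L * θ := by
    have : max ν 0 ≤ 6 * L * θ := max_le hν (by positivity)
    have : (1 - θ) ^ 2 ≤ 1 := by nlinarith
    nlinarith [le_max_right ν 0]
  have hcoef : (-6 * L * θ + Lg * θ ^ 2 + max ν 0 / 2 * (1 - θ) ^ 2) * ‖p‖ ^ 2 ≤ 0 :=
    mul_nonpos_of_nonpos_of_nonneg (by nlinarith) (sq_nonneg _)
  unfold rispLyapunovWeight
  nlinarith

theorem risp_epoch_descent (hL : 0 < L) (hLg : 0 ≤ Lg) (hLgL : Lg ≤ L) (hθ0 : 0 < θ)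
    (hθ1 : θ < 1) (hν : ν ≤ 6 * L * θ) (hη : η = 1 / (8 * L))
    (hfd : Differentiable ℝ f) (hgd : Differentiable ℝ g) (hfconv : ConvexOn ℝ Set.univ f)
    (hglip : ∀ a b, ‖gradient g a - gradient g b‖ ≤ Lg * ‖a - b‖)
    (hweak : ConvexOn ℝ Set.univ (fun w ↦ g w + (ν / 2) * ‖w‖ ^ 2))
    (hz : ∀ k, z k = x k + (1 - θ) • (x k - x (k - 1)))
    (hstep : ∀ k, (1 / η) • (z k - x (k + 1)) = gradient f (x (k + 1)) + gradient g (z k))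
    (n : ℕ) :
    f (x n) + g (x n) + 2 * L * θ * ∑ t ∈ range n, ‖x (t + 1) - x t‖ ^ 2 ≤ f (x 0) + g (x 0) := by
  set β := rispLyapunovWeight L Lg ν θ
  have hlyapunov : ∀ n, f (x n) + g (x n) + β * ‖x n - x (n - 1)‖ ^ 2
      + 2 * L * θ * ∑ t ∈ range n, ‖x (t + 1) - x t‖ ^ 2 ≤ f (x 0) + g (x 0) := by
    intro n
    induction n with
    | zero => simp
    | succ n ih =>
      have := risp_step_lyapunov_descent hL hLg hLgL hθ0 hθ1 hν hη hfd hgd hfconv hglip hweak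
        (hz n) (hstep n)
      rw [sum_range_succ, Nat.add_sub_cancel]
      linarith
  have hβ : 0 ≤ β := rispLyapunovWeight_nonneg hLgL hLg hθ1.le
  nlinarith [hlyapunov n, sq_nonneg ‖x n - x (n - 1)‖]

theorem risp_descent_across_epochs (hL : 0 < L) (hLg : 0 ≤ Lg) (hLgL : Lg ≤ L) (hθ0 : 0 < θ)
    (hθ1 : θ < 1) (hν : ν ≤ 6 * L * θ) (hη : η = 1 / (8 * L))
    (hfd : Differentiable ℝ f) (hgd : Differentiable ℝ g) (hfconv : ConvexOn ℝ Set.univ f)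
    (hglip : ∀ a b, ‖gradient g a - gradient g b‖ ≤ Lg * ‖a - b‖)
    (hweak : ConvexOn ℝ Set.univ (fun w ↦ g w + (ν / 2) * ‖w‖ ^ 2)) {B : ℝ} {K N : ℕ}
    {x z : ℕ → ℕ → E} {len : ℕ → ℕ} (hK : (K : ℝ) = θ⁻¹)
    (hchain : ∀ i < N, x (i + 1) 0 = x i (len i))
    (hz : ∀ i k, z i k = x i k + (1 - θ) • (x i k - x i (k - 1)))
    (hstep : ∀ i k,
      (1 / η) • (z i k - x i (k + 1)) = gradient f (x i (k + 1)) + gradient g (z i k))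
    (hlen_le : ∀ i < N, len i ≤ K)
    (htrigger : ∀ i < N,
      B ^ 2 < (len i : ℝ) * ∑ t ∈ range (len i), ‖x i (t + 1) - x i t‖ ^ 2) :
    f (x N 0) + g (x N 0) + N * (2 * L * θ ^ 2 * B ^ 2) ≤ f (x 0 0) + g (x 0 0) := by
  suffices h : ∀ i ≤ N, f (x i 0) + g (x i 0) + i * (2 * L * θ ^ 2 * B ^ 2)
      ≤ f (x 0 0) + g (x 0 0) from h N le_rfl
  intro i
  induction i with
  | zero => simp
  | succ i ih =>
    intro hi
    set S := ∑ t ∈ range (len i), ‖x i (t + 1) - x i t‖ ^ 2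
    have hepoch := risp_epoch_descent hL hLg hLgL hθ0 hθ1 hν hη hfd hgd hfconv hglip hweak
      (hz i) (hstep i) (len i)
    have hS : θ * B ^ 2 ≤ S := by
      have hlen : (len i : ℝ) ≤ θ⁻¹ := hK ▸ (Nat.cast_le.2 (hlen_le i hi))
      have := (htrigger i hi).trans_le (mul_le_mul_of_nonneg_right hlen (by positivity))
      rw [← div_eq_inv_mul, lt_div_iff₀ hθ0] at this
      linarith
    rw [hchain i hi]
    push_cast
    nlinarith [ih (Nat.le_of_succ_le hi), mul_le_mul_of_nonneg_left hS (by positivity : 0 ≤ L * θ)]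

theorem norm_gradient_add_at_average_le {Lf ρf ρg η r₁ r₂ : ℝ} {m : ℕ} {zbar : E}
    (hη : 0 < η) (hLf : 0 ≤ Lf) (hρf : 0 ≤ ρf) (hρg : 0 ≤ ρg)
    (hfd2 : Differentiable ℝ (gradient f)) (hgd2 : Differentiable ℝ (gradient g))
    (hflip : ∀ a b, ‖gradient f a - gradient f b‖ ≤ Lf * ‖a - b‖)
    (hfHess : ∀ a b, ‖fderiv ℝ (gradient f) a - fderiv ℝ (gradient f) b‖ ≤ ρf * ‖a - b‖)
    (hgHess : ∀ a b, ‖fderiv ℝ (gradient g) a - fderiv ℝ (gradient g) b‖ ≤ ρg * ‖a - b‖)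
    (hstep : ∀ k, (1 / η) • (z k - x (k + 1)) = gradient f (x (k + 1)) + gradient g (z k))
    (hzbar : (m : ℝ) • zbar = ∑ k ∈ range m, z k)
    (hx : ∀ k < m, ‖x (k + 1) - zbar‖ ≤ r₁) (hz : ∀ k < m, ‖z k - zbar‖ ≤ r₂) :
    m * ‖gradient f zbar + gradient g zbar‖
      ≤ (η⁻¹ + Lf) * ‖∑ k ∈ range m, (z k - x (k + 1))‖ + m * (ρf * r₁ ^ 2 + ρg * r₂ ^ 2) := by
  set T := ∑ k ∈ range m, (z k - x (k + 1))
  set Hf := fderiv ℝ (gradient f) zbar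
  set Hg := fderiv ℝ (gradient g) zbar
  have hsteps : ∑ k ∈ range m, gradient f (x (k + 1)) + ∑ k ∈ range m, gradient g (z k)
      = η⁻¹ • T := by
    rw [← sum_add_distrib, smul_sum]
    exact sum_congr rfl fun k _ ↦ by rw [← hstep k, one_div]
  have hxsum : ∑ k ∈ range m, (x (k + 1) - zbar) = -T := by
    rw [sum_sub_distrib, sum_const, card_range, ← Nat.cast_smul_eq_nsmul ℝ, hzbar, ← neg_sub,
      ← sum_sub_distrib]
  have hzsum : ∑ k ∈ range m, (z k - zbar) = 0 := by
    rw [sum_sub_distrib, sum_const, card_range, ← Nat.cast_smul_eq_nsmul ℝ, hzbar, sub_self]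
  have hf := norm_sum_sub_fderiv_sum_le hfd2 hρf hfHess hx
  have hg := norm_sum_sub_fderiv_sum_le hgd2 hρg hgHess hz
  rw [hxsum] at hf
  rw [hzsum, map_zero, sub_zero] at hg
  set Ef := ∑ k ∈ range m, gradient f (x (k + 1)) - (m : ℝ) • gradient f zbar - Hf (-T)
  set Eg := ∑ k ∈ range m, gradient g (z k) - (m : ℝ) • gradient g zbar
  have hHf : ‖Hf T‖ ≤ Lf * ‖T‖ :=
    (Hf.le_opNorm T).trans (by gcongr; exact norm_fderiv_le_of_norm_sub_le hLf hflip zbar)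
  have hdecomp : (m : ℝ) • (gradient f zbar + gradient g zbar) = η⁻¹ • T + Hf T - Ef - Eg := by
    simp only [Ef, Eg, ← hsteps, map_neg]
    module
  have hnorm : (m : ℝ) * ‖gradient f zbar + gradient g zbar‖ = ‖η⁻¹ • T + Hf T - Ef - Eg‖ := by
    rw [← hdecomp, norm_smul, Real.norm_natCast]
  rw [hnorm]
  calc ‖η⁻¹ • T + Hf T - Ef - Eg‖ ≤ ‖η⁻¹ • T + Hf T - Ef‖ + ‖Eg‖ := norm_sub_le _ _
    _ ≤ ‖η⁻¹ • T + Hf T‖ + ‖Ef‖ + ‖Eg‖ := by gcongr; exact norm_sub_le _ _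
    _ ≤ ‖η⁻¹ • T‖ + ‖Hf T‖ + ‖Ef‖ + ‖Eg‖ := by gcongr; exact norm_add_le _ _
    _ ≤ _ := by
      rw [norm_smul, Real.norm_of_nonneg (inv_nonneg.2 hη.le)]
      linarith
theorem risp_final_epoch_gradient_le {Lf ρf ρg η θ B L : ℝ} {K K₀ : ℕ} {zbar : E}
    (hL : 0 < L) (hLf : 0 ≤ Lf) (hLfL : Lf ≤ L) (hρf : 0 ≤ ρf) (hρg : 0 ≤ ρg) (hB : 0 ≤ B)
    (hθ0 : 0 < θ) (hθ1 : θ < 1) (hη : η = 1 / (8 * L)) (hK : (K : ℝ) = θ⁻¹)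
    (hfd2 : Differentiable ℝ (gradient f)) (hgd2 : Differentiable ℝ (gradient g))
    (hflip : ∀ a b, ‖gradient f a - gradient f b‖ ≤ Lf * ‖a - b‖)
    (hfHess : ∀ a b, ‖fderiv ℝ (gradient f) a - fderiv ℝ (gradient f) b‖ ≤ ρf * ‖a - b‖)
    (hgHess : ∀ a b, ‖fderiv ℝ (gradient g) a - fderiv ℝ (gradient g) b‖ ≤ ρg * ‖a - b‖)
    (hz : ∀ k, z k = x k + (1 - θ) • (x k - x (k - 1)))
    (hstep : ∀ k, (1 / η) • (z k - x (k + 1)) = gradient f (x (k + 1)) + gradient g (z k))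
    (hfinal : ∀ k, 1 ≤ k → k ≤ K →
      (k : ℝ) * ∑ t ∈ range k, ‖x (t + 1) - x t‖ ^ 2 ≤ B ^ 2)
    (hK₀lb : K / 2 ≤ K₀) (hK₀ub : K₀ ≤ K - 1)
    (hK₀min : ∀ k, K / 2 ≤ k → k ≤ K - 1 → ‖x (K₀ + 1) - x K₀‖ ≤ ‖x (k + 1) - x k‖)
    (hzbar : zbar = ((K₀ : ℝ) + 1)⁻¹ • ∑ k ∈ range (K₀ + 1), z k) :
    ‖gradient f zbar + gradient g zbar‖
      ≤ 18 * (1 + Real.sqrt 2) * L * B * θ ^ 2 + 4 * (ρf + ρg) * B ^ 2 := by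
  obtain ⟨hxr, hzr, hT⟩ :=
    risp_final_epoch_localization hB hθ0 hθ1 hK hz hfinal hK₀ub hK₀min hzbar
  have hM : ((K₀ + 1 : ℕ) : ℝ) • zbar = ∑ k ∈ range (K₀ + 1), z k := by
    rw [hzbar, smul_smul, Nat.cast_succ, mul_inv_cancel₀ (by positivity), one_smul]
  set M : ℝ := ((K₀ + 1 : ℕ) : ℝ)
  have havg := norm_gradient_add_at_average_le (by rw [hη]; positivity) hLf hρf hρg hfd2 hgd2
    hflip hfHess hgHess hstep hM hxr hzr
  rw [hη, one_div, inv_inv] at havg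
  have hKθ : 1 ≤ 2 * θ * M := by
    have : (K : ℝ) ≤ 2 * M := by simp only [M]; exact_mod_cast (by omega : K ≤ 2 * (K₀ + 1))
    rw [hK] at this
    nlinarith [mul_inv_cancel₀ hθ0.ne']
  have hT' : (8 * L + Lf) * ‖∑ k ∈ range (K₀ + 1), (z k - x (k + 1))‖
      ≤ 9 * L * ((1 + Real.sqrt 2) * θ * B) * (2 * θ * M) :=
    (mul_le_mul (by linarith) hT (norm_nonneg _) (by positivity)).trans
      (le_mul_of_one_le_right (by positivity) hKθ)
  have hρ : ρf * (3 / 2 * B) ^ 2 + ρg * (2 * B) ^ 2 ≤ 4 * (ρf + ρg) * B ^ 2 := by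
    nlinarith [mul_nonneg hρf (sq_nonneg B)]
  refine le_of_mul_le_mul_left ?_ (by positivity : (0 : ℝ) < M)
  nlinarith [mul_le_mul_of_nonneg_left hρ (by positivity : (0 : ℝ) ≤ M)]

end RispProx

/-- A run is encoded by `N` restarted epochs followed by a final epoch `N` that completes `K`
steps: `x i k`, `z i k` are the iterates of epoch `i`, `len i` is the length of restarted epoch `i`,
and truncated subtraction on `ℕ` realizes the convention `x i (0 - 1) = x i 0`. -/
theorem risp_prox_convergence_general
    {d : ℕ} (hd : 1 ≤ d)
    (f g F : EuclideanSpace ℝ (Fin d) → ℝ)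
    (Lf Lg L ρf ρg ρ ν : ℝ)
    (hLdef : L = Lf + Lg) (hρdef : ρ = ρf + ρg)
    (hFdef : ∀ w, F w = f w + g w)
    (hL : 0 < L) (hρ : 0 < ρ)
    (hfd : Differentiable ℝ f) (hfd2 : Differentiable ℝ (gradient f))
    (hgd : Differentiable ℝ g) (hgd2 : Differentiable ℝ (gradient g))
    (hfconv : ConvexOn ℝ Set.univ f)
    (hflip : ∀ a b : EuclideanSpace ℝ (Fin d),
      ‖gradient f a - gradient f b‖ ≤ Lf * ‖a - b‖)
    (hglip : ∀ a b : EuclideanSpace ℝ (Fin d),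
      ‖gradient g a - gradient g b‖ ≤ Lg * ‖a - b‖)
    (hfHess : ∀ a b : EuclideanSpace ℝ (Fin d),
      ‖fderiv ℝ (gradient f) a - fderiv ℝ (gradient f) b‖ ≤ ρf * ‖a - b‖)
    (hgHess : ∀ a b : EuclideanSpace ℝ (Fin d),
      ‖fderiv ℝ (gradient g) a - fderiv ℝ (gradient g) b‖ ≤ ρg * ‖a - b‖)
    (hweak : ConvexOn ℝ Set.univ
      (fun w : EuclideanSpace ℝ (Fin d) => g w + (ν / 2) * ‖w‖ ^ 2))
    (m : ℝ) (hm : ∀ y, m ≤ F y)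
    (x0 : EuclideanSpace ℝ (Fin d))
    (ΔF : ℝ) (hΔF : ΔF = F x0 - m)
    (n : ℕ) (hn : 1 ≤ n)
    (ε η B θ : ℝ)
    (hε : ε = ΔF ^ ((4 : ℝ) / 7) * (2 * L) ^ ((2 : ℝ) / 7) * ρ ^ ((1 : ℝ) / 7)
          * (n : ℝ) ^ (-(4 : ℝ) / 7)
          + 4 * L ^ 2 * ρ⁻¹ * (n : ℝ) ^ (-(4 : ℝ)))
    (hν : ν ≤ 8 * (ε * ρ) ^ ((1 : ℝ) / 4) * Real.sqrt L)
    (hη : η = 1 / (8 * L))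
    (hB : B = Real.sqrt (ε / (4 * ρ)))
    (hθ : θ = 4 * (ε * ρ * η ^ 2) ^ ((1 : ℝ) / 4))
    (hθ0 : 0 < θ) (hθ1 : θ < 1)
    (K : ℕ) (hK : (K : ℝ) = θ⁻¹)
    -- a complete run of the algorithm:
    (N : ℕ)
    (x z : ℕ → ℕ → EuclideanSpace ℝ (Fin d))
    (len : ℕ → ℕ)
    (hstart : x 0 0 = x0)
    (hchain : ∀ i < N, x (i + 1) 0 = x i (len i))
    (hz : ∀ i k, z i k = x i k + (1 - θ) • (x i k - x i (k - 1)))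
    (hstep : ∀ i k,
      (1 / η) • (z i k - x i (k + 1)) = gradient f (x i (k + 1)) + gradient g (z i k))
    (hlen_le : ∀ i < N, len i ≤ K)
    (htrigger : ∀ i < N,
      B ^ 2 < (len i : ℝ) * ∑ t ∈ Finset.range (len i), ‖x i (t + 1) - x i t‖ ^ 2)
    (hfinal : ∀ k, 1 ≤ k → k ≤ K →
      (k : ℝ) * ∑ t ∈ Finset.range k, ‖x N (t + 1) - x N t‖ ^ 2 ≤ B ^ 2)
    (K₀ : ℕ) (hK₀lb : K / 2 ≤ K₀) (hK₀ub : K₀ ≤ K - 1)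
    (hK₀min : ∀ k, K / 2 ≤ k → k ≤ K - 1 →
      ‖x N (K₀ + 1) - x N K₀‖ ≤ ‖x N (k + 1) - x N k‖)
    (zhat : EuclideanSpace ℝ (Fin d))
    (hzhat : zhat = ((K₀ : ℝ) + 1)⁻¹ • ∑ k ∈ Finset.range (K₀ + 1), z N k) :
    (∑ i ∈ Finset.range N, len i) + K ≤ n ∧ ‖gradient F zhat‖ ≤ 45 * ε := by
  have : Nonempty (Fin d) := ⟨⟨0, hd⟩⟩
  have hLf := nonneg_of_norm_sub_le_mul hflip
  have hLg := nonneg_of_norm_sub_le_mul hglip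
  have hΔF0 : 0 ≤ ΔF := hΔF ▸ sub_nonneg.2 (hm x0)
  obtain ⟨hB0, hεLB, hB2, hνθ, hnθ, hΔFn⟩ := risp_parameters hL hρ hΔF0 hn hε hν hη hB hθ hθ0
  refine ⟨risp_total_iterations_le hL hB0 hθ0 hK hlen_le ?_ hΔFn hnθ, ?_⟩
  · have hdescent := risp_descent_across_epochs hL hLg (by linarith) hθ0 hθ1 hνθ hη hfd hgd
      hfconv hglip hweak hK hchain hz hstep hlen_le htrigger
    have hmN := hm (x N 0)
    rw [hFdef] at hmN
    rw [hΔF, hFdef, ← hstart]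
    linarith
  · rw [show F = fun w ↦ f w + g w from funext hFdef, gradient_fun_add (hfd _) (hgd _)]
    refine (risp_final_epoch_gradient_le hL hLf (by linarith) (nonneg_of_norm_sub_le_mul hfHess)
      (nonneg_of_norm_sub_le_mul hgHess) hB0.le hθ0 hθ1 hη hK hfd2 hgd2 hflip hfHess hgHess
      (hz N) (hstep N) hfinal hK₀lb hK₀ub hK₀min hzhat).trans ?_
    rw [← hρdef]
    -- `18 * (1 + 13 / 9) + 1 = 45`
    have hsqrt : Real.sqrt 2 ≤ 13 / 9 := Real.sqrt_le_iff.2 ⟨by norm_num, by norm_num⟩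
    nlinarith [mul_pos (mul_pos hL hB0) (pow_pos hθ0 2)]

/-- Convergence of RISP-Prox (Theorem 2).
A run of the algorithm is encoded by: `N` restarted epochs followed by a final
epoch (index `N`) that completes `K` steps without triggering the restart
criterion.  `x i k` is the `k`-th iterate of epoch `i` (with the convention
`x i (k-1) = x i 0` for `k = 0`, realized by truncated subtraction on `ℕ`),
`z i k` the corresponding inertial point, and `len i` the length of restarted
epoch `i < N`.  The proximal step is encoded by its first-order optimality
characterization `(z^k - x^{k+1})/η = ∇f(x^{k+1}) + ∇g(z^k)`. -/
theorem risp_prox_convergence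
    {d : ℕ} (hd : 1 ≤ d)
    (f g F : EuclideanSpace ℝ (Fin d) → ℝ)
    (Lf Lg L ρf ρg ρ ν : ℝ)
    (hLdef : L = Lf + Lg) (hρdef : ρ = ρf + ρg)
    (hFdef : ∀ w, F w = f w + g w)
    (hL : 0 < L) (hρ : 0 < ρ)
    (hfd : Differentiable ℝ f) (hfd2 : Differentiable ℝ (gradient f))
    (hgd : Differentiable ℝ g) (hgd2 : Differentiable ℝ (gradient g))
    (hfconv : ConvexOn ℝ Set.univ f)
    (hflip : ∀ a b : EuclideanSpace ℝ (Fin d),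
      ‖gradient f a - gradient f b‖ ≤ Lf * ‖a - b‖)
    (hglip : ∀ a b : EuclideanSpace ℝ (Fin d),
      ‖gradient g a - gradient g b‖ ≤ Lg * ‖a - b‖)
    (hfHess : ∀ a b : EuclideanSpace ℝ (Fin d),
      ‖fderiv ℝ (gradient f) a - fderiv ℝ (gradient f) b‖ ≤ ρf * ‖a - b‖)
    (hgHess : ∀ a b : EuclideanSpace ℝ (Fin d),
      ‖fderiv ℝ (gradient g) a - fderiv ℝ (gradient g) b‖ ≤ ρg * ‖a - b‖)
    (hweak : ConvexOn ℝ Set.univ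
      (fun w : EuclideanSpace ℝ (Fin d) => g w + (ν / 2) * ‖w‖ ^ 2))
    (m : ℝ) (hm : ∀ y, m ≤ F y)
    (x0 : EuclideanSpace ℝ (Fin d))
    (ΔF : ℝ) (hΔF : ΔF = F x0 - m)
    (n : ℕ) (hn : 1 ≤ n)
    (ε η B θ : ℝ)
    (hε : ε = ΔF ^ ((4 : ℝ) / 7) * (2 * L) ^ ((2 : ℝ) / 7) * ρ ^ ((1 : ℝ) / 7)
          * (n : ℝ) ^ (-(4 : ℝ) / 7)
          + 4 * L ^ 2 * ρ⁻¹ * (n : ℝ) ^ (-(4 : ℝ)))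
    (hν : ν ≤ 8 * (ε * ρ) ^ ((1 : ℝ) / 4) * Real.sqrt L)
    (hη : η = 1 / (8 * L))
    (hB : B = Real.sqrt (ε / (4 * ρ)))
    (hθ : θ = 4 * (ε * ρ * η ^ 2) ^ ((1 : ℝ) / 4))
    (hθ0 : 0 < θ) (hθ1 : θ < 1)
    (K : ℕ) (hK : (K : ℝ) = θ⁻¹)
    -- a complete run of the algorithm:
    (N : ℕ)
    (x z : ℕ → ℕ → EuclideanSpace ℝ (Fin d))
    (len : ℕ → ℕ)
    (hstart : x 0 0 = x0)
    (hchain : ∀ i < N, x (i + 1) 0 = x i (len i))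
    (hz : ∀ i k, z i k = x i k + (1 - θ) • (x i k - x i (k - 1)))
    (hstep : ∀ i k,
      (1 / η) • (z i k - x i (k + 1)) = gradient f (x i (k + 1)) + gradient g (z i k))
    (hlen_pos : ∀ i < N, 1 ≤ len i)
    (hlen_le : ∀ i < N, len i ≤ K)
    (htrigger : ∀ i < N,
      B ^ 2 < (len i : ℝ) * ∑ t ∈ Finset.range (len i), ‖x i (t + 1) - x i t‖ ^ 2)
    (hno_early : ∀ i < N, ∀ k, 1 ≤ k → k < len i →
      (k : ℝ) * ∑ t ∈ Finset.range k, ‖x i (t + 1) - x i t‖ ^ 2 ≤ B ^ 2)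
    (hfinal : ∀ k, 1 ≤ k → k ≤ K →
      (k : ℝ) * ∑ t ∈ Finset.range k, ‖x N (t + 1) - x N t‖ ^ 2 ≤ B ^ 2)
    (K₀ : ℕ) (hK₀lb : K / 2 ≤ K₀) (hK₀ub : K₀ ≤ K - 1)
    (hK₀min : ∀ k, K / 2 ≤ k → k ≤ K - 1 →
      ‖x N (K₀ + 1) - x N K₀‖ ≤ ‖x N (k + 1) - x N k‖)
    (zhat : EuclideanSpace ℝ (Fin d))
    (hzhat : zhat = ((K₀ : ℝ) + 1)⁻¹ • ∑ k ∈ Finset.range (K₀ + 1), z N k) :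
    (∑ i ∈ Finset.range N, len i) + K ≤ n ∧ ‖gradient F zhat‖ ≤ 45 * ε :=
  risp_prox_convergence_general hd f g F Lf Lg L ρf ρg ρ ν hLdef hρdef hFdef hL hρ hfd hfd2 hgd hgd2
    hfconv hflip hglip hfHess hgHess hweak m hm x0 ΔF hΔF n hn ε η B θ hε hν hη hB hθ hθ0 hθ1 K hK N
    x z len hstart hchain hz hstep hlen_le htrigger hfinal K₀ hK₀lb hK₀ub hK₀min zhat hzhat
end

section
/- (Proximal descent lemma.) Let f, g : ℝ^d → ℝ be differentiable with L_f- and L_g-Lipschitz gradients respectively, L = L_f + L_g, F = f + g, and η > 0. If points z, x⁺ ∈ ℝ^d satisfy (z − x⁺)/η = ∇f(x⁺) + ∇g(z), then F(x⁺) ≤ F(z) − (1/η − (3/2)·L)·‖x⁺ − z‖². -/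
/-!
Taylor's bound for a function whose derivative is `L`-Lipschitz gives
`|u y - u x - ⟪∇u x, y - x⟫| ≤ L/2 ‖y - x‖²`. Apply it to `f` around `x⁺` and to `g` around `z`
and add: the optimality condition turns the two linear terms into `-‖x⁺ - z‖² / η`, giving the
sharper bound with `L/2`. A Lipschitz bound `‖G a - G b‖ ≤ L ‖a - b‖` forces `L ‖a - b‖² ≥ 0`,
so `L/2` may be weakened to `3L/2`.
-/

open InnerProductSpace

section Taylor

variable {E F : Type*} [NormedAddCommGroup E] [NormedSpace ℝ E]
  [NormedAddCommGroup F] [NormedSpace ℝ F]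

theorem norm_sub_sub_fderiv_le_of_norm_fderiv_sub_le {u : E → F} {L : ℝ} {x : E}
    (hu : Differentiable ℝ u) (hL : ∀ a, ‖fderiv ℝ u a - fderiv ℝ u x‖ ≤ L * ‖a - x‖) (y : E) :
    ‖u y - u x - fderiv ℝ u x (y - x)‖ ≤ L / 2 * ‖y - x‖ ^ 2 := by
  set v := y - x
  set φ : ℝ → F := fun t => u (x + t • v) - u x - t • fderiv ℝ u x v
  have hφ : ∀ t, HasDerivAt φ (fderiv ℝ u (x + t • v) v - fderiv ℝ u x v) t := by
    intro t
    have hline : HasDerivAt (fun t : ℝ => x + t • v) v t := by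
      simpa using ((hasDerivAt_id t).smul_const v).const_add x
    simpa using (((hu _).hasFDerivAt.comp_hasDerivAt t hline).sub_const (u x)).fun_sub
      ((hasDerivAt_id t).smul_const (fderiv ℝ u x v))
  have hB : ∀ t, HasDerivAt (fun t => L / 2 * ‖v‖ ^ 2 * t ^ 2) (L * ‖v‖ ^ 2 * t) t := by
    intro t
    refine ((hasDerivAt_pow 2 t).const_mul (L / 2 * ‖v‖ ^ 2)).congr_deriv ?_
    push_cast; ring
  have bound : ∀ t ∈ Set.Ico (0 : ℝ) 1,
      ‖fderiv ℝ u (x + t • v) v - fderiv ℝ u x v‖ ≤ L * ‖v‖ ^ 2 * t := by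
    rintro t ⟨ht, -⟩
    calc ‖fderiv ℝ u (x + t • v) v - fderiv ℝ u x v‖
        ≤ ‖fderiv ℝ u (x + t • v) - fderiv ℝ u x‖ * ‖v‖ := by
          rw [← sub_apply]; exact ContinuousLinearMap.le_opNorm _ _
      _ ≤ L * ‖t • v‖ * ‖v‖ := by
          gcongr; simpa using hL (x + t • v)
      _ = L * ‖v‖ ^ 2 * t := by
          rw [norm_smul, Real.norm_of_nonneg ht]; ring
  have := image_norm_le_of_norm_deriv_right_le_deriv_boundary
    (fun t _ => (hφ t).continuousAt.continuousWithinAt) (fun t _ => (hφ t).hasDerivWithinAt)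
    (by simp [φ]) hB bound (Set.right_mem_Icc.2 zero_le_one)
  simpa [φ, v] using this

end Taylor

section Gradient

variable {E : Type*} [NormedAddCommGroup E] [InnerProductSpace ℝ E] [CompleteSpace E]

theorem norm_gradient_sub_gradient (u : E → ℝ) (a b : E) :
    ‖gradient u a - gradient u b‖ = ‖fderiv ℝ u a - fderiv ℝ u b‖ := by
  rw [gradient, gradient, ← map_sub, LinearIsometryEquiv.norm_map]

theorem abs_sub_sub_inner_gradient_le {u : E → ℝ} {L : ℝ} {x : E} (hu : Differentiable ℝ u)
    (hL : ∀ a, ‖gradient u a - gradient u x‖ ≤ L * ‖a - x‖) (y : E) :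
    |u y - u x - ⟪gradient u x, y - x⟫_ℝ| ≤ L / 2 * ‖y - x‖ ^ 2 := by
  rw [gradient, toDual_symm_apply]
  exact norm_sub_sub_fderiv_le_of_norm_fderiv_sub_le hu
    (fun a => norm_gradient_sub_gradient u a x ▸ hL a) y

end Gradient

theorem mul_sq_nonneg_of_norm_sub_le {E F : Type*} [SeminormedAddCommGroup E]
    [SeminormedAddCommGroup F] {G : E → F} {L : ℝ} {a b : E}
    (h : ‖G a - G b‖ ≤ L * ‖a - b‖) : 0 ≤ L * ‖a - b‖ ^ 2 := by
  calc 0 ≤ ‖G a - G b‖ * ‖a - b‖ := by positivity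
    _ ≤ L * ‖a - b‖ * ‖a - b‖ := by gcongr
    _ = L * ‖a - b‖ ^ 2 := by ring

theorem add_le_add_sub_of_forward_backward_step {E : Type*} [NormedAddCommGroup E]
    [InnerProductSpace ℝ E] [CompleteSpace E] {f g : E → ℝ} {Lf Lg η : ℝ} {z xp : E}
    (hfd : Differentiable ℝ f) (hgd : Differentiable ℝ g)
    (hflip : ∀ a, ‖gradient f a - gradient f xp‖ ≤ Lf * ‖a - xp‖)
    (hglip : ∀ a, ‖gradient g a - gradient g z‖ ≤ Lg * ‖a - z‖)
    (hchar : (1 / η) • (z - xp) = gradient f xp + gradient g z) :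
    f xp + g xp ≤ f z + g z - (1 / η - (Lf + Lg) / 2) * ‖xp - z‖ ^ 2 := by
  have hf := abs_le.1 (abs_sub_sub_inner_gradient_le hfd hflip z)
  have hg := abs_le.1 (abs_sub_sub_inner_gradient_le hgd hglip xp)
  have hinner : ⟪gradient f xp, xp - z⟫_ℝ + ⟪gradient g z, xp - z⟫_ℝ
      = -(1 / η) * ‖xp - z‖ ^ 2 := by
    rw [← inner_add_left, ← hchar, real_inner_smul_left, ← neg_sub xp z, inner_neg_left,
      real_inner_self_eq_norm_sq]
    ring
  rw [← neg_sub xp z, inner_neg_right, norm_neg] at hf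
  linarith [hf.1, hg.2]

theorem prox_descent_lemma_general
    {d : ℕ}
    (f g : EuclideanSpace ℝ (Fin d) → ℝ) (Lf Lg : ℝ)
    (hfd : Differentiable ℝ f) (hgd : Differentiable ℝ g)
    (hflip : ∀ a b : EuclideanSpace ℝ (Fin d),
      ‖gradient f a - gradient f b‖ ≤ Lf * ‖a - b‖)
    (hglip : ∀ a b : EuclideanSpace ℝ (Fin d),
      ‖gradient g a - gradient g b‖ ≤ Lg * ‖a - b‖)
    (η : ℝ)
    (z xp : EuclideanSpace ℝ (Fin d))
    (hchar : (1 / η) • (z - xp) = gradient f xp + gradient g z) :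
    f xp + g xp ≤ f z + g z - (1 / η - (3 / 2) * (Lf + Lg)) * ‖xp - z‖ ^ 2 := by
  have hdescent := add_le_add_sub_of_forward_backward_step hfd hgd
    (fun a => hflip a xp) (fun a => hglip a z) hchar
  have hLf := mul_sq_nonneg_of_norm_sub_le (hflip xp z)
  have hLg := mul_sq_nonneg_of_norm_sub_le (hglip xp z)
  linarith

/-- Proximal descent lemma. -/
theorem prox_descent_lemma
    {d : ℕ} (hd : 1 ≤ d)
    (f g : EuclideanSpace ℝ (Fin d) → ℝ) (Lf Lg : ℝ)
    (hfd : Differentiable ℝ f) (hgd : Differentiable ℝ g)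
    (hflip : ∀ a b : EuclideanSpace ℝ (Fin d),
      ‖gradient f a - gradient f b‖ ≤ Lf * ‖a - b‖)
    (hglip : ∀ a b : EuclideanSpace ℝ (Fin d),
      ‖gradient g a - gradient g b‖ ≤ Lg * ‖a - b‖)
    (η : ℝ) (hη : 0 < η)
    (z xp : EuclideanSpace ℝ (Fin d))
    (hchar : (1 / η) • (z - xp) = gradient f xp + gradient g z) :
    f xp + g xp ≤ f z + g z - (1 / η - (3 / 2) * (Lf + Lg)) * ‖xp - z‖ ^ 2 :=
  prox_descent_lemma_general f g Lf Lg hfd hgd hflip hglip η z xp hchar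
end

section
/- (Energy decrease for the heavy-ball ODE up to a restart time.) Let F : ℝ^d → ℝ be continuously differentiable, α > 0, and let x : [0,∞) → ℝ^d be twice differentiable and solve the heavy-ball ODE ẍ_t + α·ẋ_t + ∇F(x_t) = 0 for all t ≥ 0, with ẋ_0 = 0. Let B ≥ 0 and 0 < T ≤ T_max be such that T·∫₀ᵀ ‖ẋ_t‖² dt = B². Then F(x_T) − F(x_0) ≤ −α·B²/T_max. -/
/-!
Along a solution of `ẍ + α ẋ + ∇F(x) = 0` the mechanical energy `F(x) + ‖ẋ‖²/2` has derivative
`-α ‖ẋ‖²`, so it drops by `α ∫₀ᵀ ‖ẋ‖²` on `[0, T]`. Since `ẋ₀ = 0`, the drop of `F` is at least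
the drop of the energy, and the restart condition turns `α ∫₀ᵀ ‖ẋ‖²` into `α B² / T ≥ α B² / T_max`.
-/

open RealInnerProductSpace Set

section HeavyBall

variable {E : Type*} [NormedAddCommGroup E] [InnerProductSpace ℝ E] [CompleteSpace E]

noncomputable def heavyBallEnergy (F : E → ℝ) (x v : ℝ → E) (t : ℝ) : ℝ :=
  F (x t) + ‖v t‖ ^ 2 / 2

theorem hasDerivAt_heavyBallEnergy {F : E → ℝ} {α t : ℝ} {x v a : ℝ → E}
    (hF : DifferentiableAt ℝ F (x t)) (hx : HasDerivAt x (v t) t) (hv : HasDerivAt v (a t) t)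
    (hode : a t + α • v t + gradient F (x t) = 0) :
    HasDerivAt (heavyBallEnergy F x v) (-(α * ‖v t‖ ^ 2)) t := by
  have hFx : HasDerivAt (fun s => F (x s)) ⟪gradient F (x t), v t⟫ t := by
    have := hF.hasFDerivAt.comp_hasDerivAt t hx
    rw [hF.hasGradientAt.fderiv_apply] at this
    exact this
  have ha : a t = -(α • v t) - gradient F (x t) := by
    linear_combination (norm := module) hode
  refine (hFx.add (hv.norm_sq.div_const 2)).congr_deriv ?_
  rw [ha, inner_sub_right, inner_neg_right, real_inner_smul_right, real_inner_self_eq_norm_sq,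
    real_inner_comm]
  ring

theorem heavyBallEnergy_sub_eq_neg_integral {F : E → ℝ} {α T : ℝ} {x v a : ℝ → E}
    (hF : Differentiable ℝ F) (hT : 0 ≤ T)
    (hx : ∀ t ∈ Icc 0 T, HasDerivAt x (v t) t) (hv : ∀ t ∈ Icc 0 T, HasDerivAt v (a t) t)
    (hode : ∀ t ∈ Icc 0 T, a t + α • v t + gradient F (x t) = 0) :
    heavyBallEnergy F x v T - heavyBallEnergy F x v 0 = -(α * ∫ t in 0..T, ‖v t‖ ^ 2) := by
  have hv_cont : ContinuousOn v (Icc 0 T) := fun t ht =>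
    (hv t ht).continuousAt.continuousWithinAt
  rw [← intervalIntegral.integral_const_mul, ← intervalIntegral.integral_neg]
  refine (intervalIntegral.integral_eq_sub_of_hasDerivAt (fun t ht => ?_) ?_).symm
  · rw [uIcc_of_le hT] at ht
    exact hasDerivAt_heavyBallEnergy (hF _) (hx t ht) (hv t ht) (hode t ht)
  · refine ContinuousOn.intervalIntegrable ?_
    rw [uIcc_of_le hT]
    exact ((hv_cont.norm.pow 2).const_smul α).neg

end HeavyBall

theorem heavy_ball_energy_decrease_at_restart_general
    {d : ℕ}
    (F : EuclideanSpace ℝ (Fin d) → ℝ) (hF : ContDiff ℝ 1 F)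
    (α : ℝ) (hα : 0 < α)
    (x v a : ℝ → EuclideanSpace ℝ (Fin d))
    (hx : ∀ t : ℝ, 0 ≤ t → HasDerivAt x (v t) t)
    (hv : ∀ t : ℝ, 0 ≤ t → HasDerivAt v (a t) t)
    (hode : ∀ t : ℝ, 0 ≤ t → a t + α • v t + gradient F (x t) = 0)
    (hv0 : v 0 = 0)
    (B Tmax T : ℝ) (hT : 0 < T) (hTmax : T ≤ Tmax)
    (hrestart : T * ∫ t in (0 : ℝ)..T, ‖v t‖ ^ 2 = B ^ 2) :
    F (x T) - F (x 0) ≤ -α * B ^ 2 / Tmax := by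
  have hdrop := heavyBallEnergy_sub_eq_neg_integral (hF.differentiable one_ne_zero) hT.le
    (fun t ht => hx t ht.1) (fun t ht => hv t ht.1) (fun t ht => hode t ht.1)
  have hintegral : ∫ t in (0 : ℝ)..T, ‖v t‖ ^ 2 = B ^ 2 / T := by
    rw [← hrestart, mul_div_cancel_left₀ _ hT.ne']
  have hmono : α * B ^ 2 / Tmax ≤ α * B ^ 2 / T :=
    div_le_div_of_nonneg_left (by positivity) hT hTmax
  simp only [heavyBallEnergy, hv0, norm_zero, hintegral] at hdrop
  have hvT := sq_nonneg ‖v T‖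
  calc F (x T) - F (x 0) ≤ -(α * (B ^ 2 / T)) := by linarith
    _ ≤ -α * B ^ 2 / Tmax := by rw [neg_mul, neg_div, mul_div_assoc']; linarith

/-- Energy decrease for the heavy-ball ODE up to a restart time.
The curve `x` has first derivative `v` and second derivative `a` on `[0,∞)`. -/
theorem heavy_ball_energy_decrease_at_restart
    {d : ℕ} (hd : 1 ≤ d)
    (F : EuclideanSpace ℝ (Fin d) → ℝ) (hF : ContDiff ℝ 1 F)
    (α : ℝ) (hα : 0 < α)
    (x v a : ℝ → EuclideanSpace ℝ (Fin d))
    (hx : ∀ t : ℝ, 0 ≤ t → HasDerivAt x (v t) t)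
    (hv : ∀ t : ℝ, 0 ≤ t → HasDerivAt v (a t) t)
    (hode : ∀ t : ℝ, 0 ≤ t → a t + α • v t + gradient F (x t) = 0)
    (hv0 : v 0 = 0)
    (B Tmax T : ℝ) (hB : 0 ≤ B) (hT : 0 < T) (hTmax : T ≤ Tmax)
    (hrestart : T * ∫ t in (0 : ℝ)..T, ‖v t‖ ^ 2 = B ^ 2) :
    F (x T) - F (x 0) ≤ -α * B ^ 2 / Tmax :=
  heavy_ball_energy_decrease_at_restart_general F hF α hα x v a hx hv hode hv0 B Tmax T hT hTmax
    hrestart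
end
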